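/- Let K be a Fraïssé structure with age 𝒦 and A ∈ 𝒦. The set of non-thick subsets of Emb(A, K) is closed under finite unions (i.e., forms an ideal) if and only if A is a Ramsey object in 𝒦. Consequently, there exists an ultrafilter on Emb(A, K) all of whose members are thick if and only if A is a Ramsey object. -/

import Mathlib

open FirstOrder CategoryTheory

universe u v

/-- A structure is locally finite if it is the union of an increasing chain of finite
substructures. -/
def IsLocallyFinite (L : FirstOrder.Language.{u, v}) (M : Type) [L.Structure M] : Prop :=
  ∃ A : ℕ → L.Substructure M, Monotone A ∧ (∀ n, ((A n : Set M)).Finite) ∧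
    (⋃ n, ((A n : Set M))) = Set.univ

/-- `M` is ultrahomogeneous: every isomorphism between finite substructures of `M`
extends to an automorphism of `M`. -/
def IsUltrahomog (L : FirstOrder.Language.{u, v}) (M : Type) [L.Structure M] : Prop :=
  ∀ S T : L.Substructure M, (S : Set M).Finite → (T : Set M).Finite →
    ∀ f : S ≃[L] T, ∃ g : M ≃[L] M, ∀ x : S, g x = f x

/-- `A` belongs to the age of `M`: `A` is finite and embeds into `M`. -/
def InAge (L : FirstOrder.Language.{u, v}) (M : Type) [L.Structure M]
    (A : Bundled.{0} L.Structure) : Prop :=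
  Finite A ∧ Nonempty (A ↪[L] M)

/-- `S ⊆ Emb(A, M)` is thick: for every finite `B` embeddable in `M` with
`Emb(A, B) ≠ ∅`, there is `g ∈ Emb(B, M)` with `g ∘ Emb(A, B) ⊆ S`. -/
def Thick (L : FirstOrder.Language.{u, v}) (M : Type) [L.Structure M]
    (A : Bundled.{0} L.Structure) (S : Set (A ↪[L] M)) : Prop :=
  ∀ B : Bundled.{0} L.Structure, Finite B → Nonempty (B ↪[L] M) →
    Nonempty (A ↪[L] B) → ∃ g : B ↪[L] M, ∀ h : A ↪[L] B, g.comp h ∈ S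

/-- `A` is a Ramsey object in the age of `M`: every full 2-coloring of `Emb(A, M)` has
a thick color class. -/
def IsRamseyObject (L : FirstOrder.Language.{u, v}) (M : Type) [L.Structure M]
    (A : Bundled.{0} L.Structure) : Prop :=
  ∀ γ : (A ↪[L] M) → Bool, ∃ i : Bool, Thick L M A {x | γ x = i}

/-! The empty set is not thick and `Emb(A, M)` is, so if the non-thick sets form an ideal, its
dual filter extends to an ultrafilter of thick sets; a thick ultrafilter, or the ideal property
applied to the two classes of a colouring, gives a thick colour class. The substance is that a
Ramsey object makes non-thick sets closed under unions. By compactness along a finite exhaustion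
`A₀ ⊆ A₁ ⊆ ⋯` of `M`, every finite `B` admits a stage with `Aₙ → (B)^A_2`. If `S` and `T` both
fail thickness at a common stage `B`, colouring `Emb(A, Aₙ)` by membership in `S` turns a witness
of thickness of `S ∪ T` at `Aₙ` into one for `S` or for `T` at `B`. -/

open FirstOrder.Language Filter

theorem exists_ultrafilter_forall_of_not_union {α : Type*} {P : Set α → Prop} (hmono : Monotone P)
    (hempty : ¬P ∅) (huniv : P Set.univ) (hunion : ∀ s t, ¬P s → ¬P t → ¬P (s ∪ t)) :
    ∃ p : Ultrafilter α, ∀ s ∈ p, P s := by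
  let F : Filter α := Filter.comk (fun s => ¬P s) hempty
    (fun _ ht _ hst hs => ht (hmono hst hs)) fun s hs t ht => hunion s t hs ht
  have : F.NeBot :=
    ⟨fun h => Filter.mem_comk.1 (Filter.empty_mem_iff_bot.2 h) (Set.compl_empty ▸ huniv)⟩
  refine ⟨Ultrafilter.of F, fun s hs => by_contra fun hPs => ?_⟩
  have hcompl : sᶜ ∈ F := Filter.mem_comk.2 (by rwa [compl_compl])
  exact Ultrafilter.compl_notMem_iff.2 hs (Ultrafilter.of_le F hcompl)

theorem Ultrafilter.exists_eventually_eq {α β : Type*} [Finite β] (U : Ultrafilter α)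
    (b : α → β) : ∃ i, ∀ᶠ x in U, b x = i :=
  let ⟨i, hi⟩ := (U.map b).eq_pure_of_finite
  ⟨i, show b ⁻¹' {i} ∈ U from Ultrafilter.mem_map.1 (hi ▸ Ultrafilter.mem_pure.2 rfl)⟩

theorem eventually_mem_of_monotone_of_iUnion_eq_univ {M : Type*} {An : ℕ → Set M}
    (hm : Monotone An) (hcov : ⋃ n, An n = Set.univ) (x : M) : ∀ᶠ n in atTop, x ∈ An n := by
  obtain ⟨k, hk⟩ := Set.mem_iUnion.1 (hcov ▸ Set.mem_univ x)
  exact eventually_atTop.2 ⟨k, fun n hn => hm hn hk⟩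

/-- The Erdős–Rado arrow `C → (B)^A_2`. -/
def Arrows (L : FirstOrder.Language.{u, v}) (A B C : Type*)
    [L.Structure A] [L.Structure B] [L.Structure C] : Prop :=
  ∀ c : (A ↪[L] C) → Bool, ∃ b : B ↪[L] C, ∃ i : Bool, ∀ h : A ↪[L] B, c (b.comp h) = i

section ThickAt

variable {L : FirstOrder.Language.{u, v}} {A B C M : Type*}
  [L.Structure A] [L.Structure B] [L.Structure C] [L.Structure M]

def ThickAt (S : Set (A ↪[L] M)) (B : Type*) [L.Structure B] : Prop :=
  ∃ g : B ↪[L] M, ∀ h : A ↪[L] B, g.comp h ∈ S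

theorem ThickAt.of_embedding {S : Set (A ↪[L] M)} (hS : ThickAt S C) (e : B ↪[L] C) :
    ThickAt S B :=
  let ⟨g, hg⟩ := hS
  ⟨g.comp e, fun h => by simpa only [Embedding.comp_assoc] using hg (e.comp h)⟩

theorem ThickAt.union_of_arrows {S T : Set (A ↪[L] M)} (hST : ThickAt (S ∪ T) C)
    (hABC : Arrows L A B C) : ThickAt S B ∨ ThickAt T B := by
  classical
  obtain ⟨g, hg⟩ := hST
  obtain ⟨b, i, hb⟩ := hABC fun h => decide (g.comp h ∈ S)
  have hgb : ∀ h : A ↪[L] B, (g.comp b).comp h = g.comp (b.comp h) := fun _ => rfl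
  cases i
  · refine .inr ⟨g.comp b, fun h => ?_⟩
    rw [hgb]
    exact (hg (b.comp h)).resolve_left (by simpa using hb h)
  · exact .inl ⟨g.comp b, fun h => by simpa [hgb] using hb h⟩

end ThickAt

section Thick

variable {L : FirstOrder.Language.{u, v}} {M : Type} [L.Structure M] {A : Bundled.{0} L.Structure}

theorem thick_iff_forall_thickAt {S : Set (A ↪[L] M)} :
    Thick L M A S ↔ ∀ B : Bundled.{0} L.Structure, Finite B → Nonempty (B ↪[L] M) →
      Nonempty (A ↪[L] B) → ThickAt S B :=
  Iff.rfl

theorem Thick.mono {S T : Set (A ↪[L] M)} (hST : S ⊆ T) (hS : Thick L M A S) : Thick L M A T :=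
  fun B hB hBM hAB => (hS B hB hBM hAB).imp fun _ hg h => hST (hg h)

theorem thick_univ : Thick L M A Set.univ :=
  fun _ _ hBM _ => ⟨hBM.some, fun _ => trivial⟩

theorem not_thick_empty (hA : InAge L M A) : ¬Thick L M A ∅ := fun h =>
  let ⟨_, hg⟩ := h A hA.1 hA.2 ⟨Embedding.refl L A⟩
  hg (Embedding.refl L A)

theorem isRamseyObject_of_ultrafilter {p : Ultrafilter (A ↪[L] M)}
    (hp : ∀ S ∈ p, Thick L M A S) : IsRamseyObject L M A := fun γ =>
  (p.mem_or_compl_mem {x | γ x = true}).elim (fun h => ⟨true, hp _ h⟩)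
    fun h => ⟨false, (hp _ h).mono fun _ hx => Bool.eq_false_iff.2 hx⟩

theorem isRamseyObject_of_not_thick_union
    (hI : ∀ S T : Set (A ↪[L] M), ¬Thick L M A S → ¬Thick L M A T → ¬Thick L M A (S ∪ T)) :
    IsRamseyObject L M A := fun γ => by
  by_contra! h
  exact hI _ _ (h true) (h false) (thick_univ.mono fun _ _ => by simp)

variable {An : ℕ → L.Substructure M}

theorem IsRamseyObject.exists_arrows (hm : Monotone An) (hcov : ⋃ n, (An n : Set M) = Set.univ)
    (hR : IsRamseyObject L M A) (B : Bundled.{0} L.Structure) (hB : Finite B) (f : B ↪[L] M)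
    (hAB : Nonempty (A ↪[L] B)) : ∃ n, Arrows L A B (An n) := by
  classical
  by_contra! hbad
  simp only [Arrows] at hbad
  push Not at hbad
  choose c hc using hbad
  have : Finite A := Finite.of_injective _ hAB.some.injective
  have : Finite (A ↪[L] B) := Finite.of_injective _ DFunLike.coe_injective
  let U : Ultrafilter ℕ := Ultrafilter.of atTop
  have hU : ∀ x, ∀ᶠ n in U, x ∈ An n := fun x => Ultrafilter.of_le atTop
    (eventually_mem_of_monotone_of_iUnion_eq_univ (fun _ _ h => hm h) hcov x)
  -- `γ f` is the `U`-limit of the colours of the restrictions of `f` to the stages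
  let c' : ℕ → (A ↪[L] M) → Bool := fun n f =>
    if hf : ∀ a, f a ∈ An n then c n (Embedding.codRestrict (An n) f hf) else false
  choose γ hγ using fun f => U.exists_eventually_eq fun n => c' n f
  obtain ⟨i, hi⟩ := hR γ
  obtain ⟨g, hg⟩ := hi B hB ⟨f⟩ hAB
  have hlim : ∀ᶠ n in U, (∀ b, g b ∈ An n) ∧ ∀ h : A ↪[L] B, c' n (g.comp h) = i :=
    (eventually_all.2 fun b => hU (g b)).and <| eventually_all.2 fun h =>
      (hγ (g.comp h)).mono fun _ hn => hn.trans (hg h)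
  obtain ⟨n, hgn, hgi⟩ := hlim.exists
  obtain ⟨h, hh⟩ := hc n (Embedding.codRestrict (An n) g hgn) i
  refine hh ?_
  simpa [c', Embedding.comp_codRestrict, hgn] using hgi h

theorem not_thick_union_of_isRamseyObject (hlf : IsLocallyFinite L M) (hR : IsRamseyObject L M A)
    {S T : Set (A ↪[L] M)} (hS : ¬Thick L M A S) (hT : ¬Thick L M A T) :
    ¬Thick L M A (S ∪ T) := by
  obtain ⟨An, hm, hfin, hcov⟩ := hlf
  have : ∀ n, Finite (An n) := fun n => (hfin n).to_subtype
  have hstage : ∀ {X : Set (A ↪[L] M)}, ¬Thick L M A X →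
      ∀ᶠ n in atTop, Nonempty (A ↪[L] An n) ∧ ¬ThickAt X (An n) := by
    intro X hX
    simp only [thick_iff_forall_thickAt, not_forall] at hX
    obtain ⟨B, hB, ⟨f⟩, ⟨e⟩, hXB⟩ := hX
    refine (eventually_all.2 fun b =>
      eventually_mem_of_monotone_of_iUnion_eq_univ (fun _ _ h => hm h) hcov (f b)).mono
        fun n hn => ⟨⟨(Embedding.codRestrict (An n) f hn).comp e⟩,
          fun hXn => hXB (hXn.of_embedding (Embedding.codRestrict (An n) f hn))⟩
  obtain ⟨m, ⟨⟨e⟩, hSm⟩, -, hTm⟩ := ((hstage hS).and (hstage hT)).exists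
  obtain ⟨n, hn⟩ := hR.exists_arrows hm hcov (Bundled.of (An m)) (this m) (An m).subtype ⟨e⟩
  obtain ⟨b, -⟩ := hn fun _ => true
  intro hST
  exact (ThickAt.union_of_arrows (hST (Bundled.of (An n)) (this n) ⟨(An n).subtype⟩ ⟨b.comp e⟩)
    hn).elim hSm hTm

end Thick

theorem nonThick_ideal_iff_ramsey_and_thick_ultrafilter_iff_ramsey_general
    (L : FirstOrder.Language.{u, v}) (M : Type) [L.Structure M]
    (hlf : IsLocallyFinite L M)
    (A : Bundled.{0} L.Structure) (hA : InAge L M A) :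
    ((∀ S T : Set (A ↪[L] M), ¬ Thick L M A S → ¬ Thick L M A T →
        ¬ Thick L M A (S ∪ T)) ↔ IsRamseyObject L M A) ∧
      ((∃ p : Ultrafilter (A ↪[L] M), ∀ S ∈ p, Thick L M A S) ↔
        IsRamseyObject L M A) := by
  have hideal : (∀ S T : Set (A ↪[L] M), ¬ Thick L M A S → ¬ Thick L M A T →
      ¬ Thick L M A (S ∪ T)) ↔ IsRamseyObject L M A :=
    ⟨isRamseyObject_of_not_thick_union, fun hR _ _ => not_thick_union_of_isRamseyObject hlf hR⟩
  refine ⟨hideal, fun ⟨_, hp⟩ => isRamseyObject_of_ultrafilter hp, fun hR => ?_⟩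
  exact exists_ultrafilter_forall_of_not_union (fun _ _ hST hS => hS.mono hST)
    (not_thick_empty hA) thick_univ (hideal.2 hR)

/-- For `A` in the age of a Fraïssé structure `K`, the non-thick subsets of
`Emb(A, K)` are closed under finite unions (form an ideal) iff `A` is a Ramsey object;
consequently there is an ultrafilter on `Emb(A, K)` all of whose members are thick iff
`A` is a Ramsey object. -/
theorem nonThick_ideal_iff_ramsey_and_thick_ultrafilter_iff_ramsey
    (L : FirstOrder.Language.{u, v}) (M : Type) [L.Structure M]
    (hcount : Countable M) (hinf : Infinite M)
    (hlf : IsLocallyFinite L M) (hultra : IsUltrahomog L M)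
    (A : Bundled.{0} L.Structure) (hA : InAge L M A) :
    ((∀ S T : Set (A ↪[L] M), ¬ Thick L M A S → ¬ Thick L M A T →
        ¬ Thick L M A (S ∪ T)) ↔ IsRamseyObject L M A) ∧
      ((∃ p : Ultrafilter (A ↪[L] M), ∀ S ∈ p, Thick L M A S) ↔
        IsRamseyObject L M A) :=
  nonThick_ideal_iff_ramsey_and_thick_ultrafilter_iff_ramsey_general L M hlf A hA
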